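/- Let d ≥ 1, and consider the deep decoder G with d layers. Assume ξ ≥ 0, μ ≥ 1, that the fixed input matrix satisfies ‖B₁‖_F ≤ ξ, and that every upsampling matrix satisfies ‖Uᵢ‖ ≤ 1 in spectral norm. Then for all coefficient tuples C = (C₁,…,C_{d−1},c_d) and C′ = (C₁′,…,C_{d−1}′,c_d′) in the μ-bounded set B_μ, ‖G(C) − G(C′)‖₂ ≤ ξ · μ^d · ( Σ_{i=1}^{d−1} ‖Cᵢ − Cᵢ′‖_F + ‖c_d − c_d′‖₂ ). -/
import Mathlib


open Matrix Finset

/-- Euclidean (ℓ₂) norm of a vector. -/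
noncomputable def euclNorm {ι : Type*} [Fintype ι] (v : ι → ℝ) : ℝ :=
  Real.sqrt (∑ i, v i ^ 2)

/-- Frobenius norm of a matrix. -/
noncomputable def frobNorm {ι κ : Type*} [Fintype ι] [Fintype κ] (A : Matrix ι κ ℝ) : ℝ :=
  Real.sqrt (∑ i, ∑ j, A i j ^ 2)

/-- Spectral (operator ℓ₂ → ℓ₂) norm of a matrix. -/
noncomputable def specNorm {ι κ : Type*} [Fintype ι] [Fintype κ] (A : Matrix ι κ ℝ) : ℝ :=
  sSup {r : ℝ | ∃ v : κ → ℝ, euclNorm v ≤ 1 ∧ r = euclNorm (A *ᵥ v)}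

/-- Entrywise ReLU of a matrix. -/
def reluM {ι κ : Type*} (A : Matrix ι κ ℝ) : Matrix ι κ ℝ :=
  Matrix.of fun i j => max (A i j) 0

section Aux

variable {ι κ σ : Type*} [Fintype ι] [Fintype κ] [Fintype σ]

lemma euclNorm_nonneg (v : ι → ℝ) : 0 ≤ euclNorm v := Real.sqrt_nonneg _

lemma frobNorm_nonneg (A : Matrix ι κ ℝ) : 0 ≤ frobNorm A := Real.sqrt_nonneg _

lemma sqrt_le_of_le_sq {a s : ℝ} (ha : 0 ≤ a) (h : s ≤ a ^ 2) : Real.sqrt s ≤ a := by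
  calc Real.sqrt s ≤ Real.sqrt (a ^ 2) := Real.sqrt_le_sqrt h
    _ = a := Real.sqrt_sq ha

lemma sq_euclNorm (v : ι → ℝ) : euclNorm v ^ 2 = ∑ i, v i ^ 2 :=
  Real.sq_sqrt (Finset.sum_nonneg fun _ _ => sq_nonneg _)

lemma sq_frobNorm (A : Matrix ι κ ℝ) : frobNorm A ^ 2 = ∑ i, ∑ j, A i j ^ 2 :=
  Real.sq_sqrt (Finset.sum_nonneg fun _ _ => Finset.sum_nonneg fun _ _ => sq_nonneg _)

lemma inner_le_euclNorm (v w : ι → ℝ) : ∑ i, v i * w i ≤ euclNorm v * euclNorm w := by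
  calc ∑ i, v i * w i ≤ Real.sqrt ((∑ i, v i * w i) ^ 2) := by
        rw [Real.sqrt_sq_eq_abs]; exact le_abs_self _
    _ ≤ Real.sqrt ((∑ i, v i ^ 2) * ∑ i, w i ^ 2) :=
        Real.sqrt_le_sqrt (Finset.sum_mul_sq_le_sq_mul_sq _ _ _)
    _ = euclNorm v * euclNorm w :=
        Real.sqrt_mul (Finset.sum_nonneg fun _ _ => sq_nonneg _) _

lemma euclNorm_add_le (u v : ι → ℝ) : euclNorm (u + v) ≤ euclNorm u + euclNorm v := by
  apply sqrt_le_of_le_sq (add_nonneg (euclNorm_nonneg u) (euclNorm_nonneg v))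
  have h1 : ∑ i, (u i + v i) ^ 2
      = (∑ i, u i ^ 2) + 2 * (∑ i, u i * v i) + ∑ i, v i ^ 2 := by
    rw [Finset.mul_sum, ← Finset.sum_add_distrib, ← Finset.sum_add_distrib]
    exact Finset.sum_congr rfl fun i _ => by ring
  have h2 := inner_le_euclNorm u v
  have h3 := sq_euclNorm u
  have h4 := sq_euclNorm v
  simp only [Pi.add_apply] at *
  nlinarith [euclNorm_nonneg u, euclNorm_nonneg v]

lemma frobNorm_add_le (X Y : Matrix ι κ ℝ) : frobNorm (X + Y) ≤ frobNorm X + frobNorm Y := by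
  have h := euclNorm_add_le (fun p : ι × κ => X p.1 p.2) (fun p : ι × κ => Y p.1 p.2)
  have e : ∀ (Z : Matrix ι κ ℝ), frobNorm Z = euclNorm (fun p : ι × κ => Z p.1 p.2) := by
    intro Z; unfold frobNorm euclNorm; rw [Fintype.sum_prod_type]
  rw [e, e, e]
  exact h

lemma euclNorm_mulVec_le (A : Matrix ι κ ℝ) (v : κ → ℝ) :
    euclNorm (A *ᵥ v) ≤ frobNorm A * euclNorm v := by
  apply sqrt_le_of_le_sq (mul_nonneg (frobNorm_nonneg A) (euclNorm_nonneg v))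
  rw [mul_pow, sq_frobNorm, sq_euclNorm]
  calc ∑ i, (A *ᵥ v) i ^ 2 = ∑ i, (∑ j, A i j * v j) ^ 2 := by
        simp [Matrix.mulVec, dotProduct]
    _ ≤ ∑ i, (∑ j, A i j ^ 2) * ∑ j, v j ^ 2 :=
        Finset.sum_le_sum fun i _ => Finset.sum_mul_sq_le_sq_mul_sq _ _ _
    _ = (∑ i, ∑ j, A i j ^ 2) * ∑ j, v j ^ 2 := by rw [Finset.sum_mul]

lemma frobNorm_mul_le (A : Matrix ι κ ℝ) (M : Matrix κ σ ℝ) :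
    frobNorm (A * M) ≤ frobNorm A * frobNorm M := by
  apply sqrt_le_of_le_sq (mul_nonneg (frobNorm_nonneg A) (frobNorm_nonneg M))
  rw [mul_pow, sq_frobNorm, sq_frobNorm]
  calc ∑ i, ∑ j, (A * M) i j ^ 2 = ∑ i, ∑ j, (∑ l, A i l * M l j) ^ 2 := by
        simp [Matrix.mul_apply]
    _ ≤ ∑ i, ∑ j, (∑ l, A i l ^ 2) * ∑ l, M l j ^ 2 :=
        Finset.sum_le_sum fun i _ => Finset.sum_le_sum fun j _ =>
          Finset.sum_mul_sq_le_sq_mul_sq _ _ _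
    _ = (∑ i, ∑ l, A i l ^ 2) * ∑ l, ∑ j, M l j ^ 2 := by
        rw [Finset.sum_mul]
        refine Finset.sum_congr rfl fun i _ => ?_
        rw [← Finset.mul_sum, Finset.sum_comm]

lemma specSet_bddAbove (A : Matrix ι κ ℝ) :
    BddAbove {r : ℝ | ∃ v : κ → ℝ, euclNorm v ≤ 1 ∧ r = euclNorm (A *ᵥ v)} := by
  refine ⟨frobNorm A, ?_⟩
  rintro r ⟨v, hv, rfl⟩
  calc euclNorm (A *ᵥ v) ≤ frobNorm A * euclNorm v := euclNorm_mulVec_le A v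
    _ ≤ frobNorm A * 1 := mul_le_mul_of_nonneg_left hv (frobNorm_nonneg A)
    _ = frobNorm A := mul_one _

lemma euclNorm_zero : euclNorm (0 : ι → ℝ) = 0 := by simp [euclNorm]

lemma specNorm_nonneg (A : Matrix ι κ ℝ) : 0 ≤ specNorm A := by
  refine le_csSup (specSet_bddAbove A) ⟨0, ?_, ?_⟩
  · rw [euclNorm_zero]; exact zero_le_one
  · rw [Matrix.mulVec_zero, euclNorm_zero]

lemma euclNorm_smul (a : ℝ) (v : ι → ℝ) : euclNorm (a • v) = |a| * euclNorm v := by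
  unfold euclNorm
  rw [← Real.sqrt_sq_eq_abs, ← Real.sqrt_mul (sq_nonneg a), Finset.mul_sum]
  congr 1
  exact Finset.sum_congr rfl fun i _ => by simp [mul_pow]

lemma euclNorm_eq_zero {v : ι → ℝ} (h : euclNorm v = 0) : v = 0 := by
  have hs : ∑ i, v i ^ 2 = 0 := by
    rw [← sq_euclNorm v, h]; norm_num
  funext i
  have := (Finset.sum_eq_zero_iff_of_nonneg (fun i _ => sq_nonneg (v i))).mp hs i (Finset.mem_univ i)
  exact pow_eq_zero_iff (by norm_num) |>.mp this

lemma euclNorm_mulVec_le_spec (A : Matrix ι κ ℝ) (v : κ → ℝ) :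
    euclNorm (A *ᵥ v) ≤ specNorm A * euclNorm v := by
  by_cases hv : euclNorm v = 0
  · rw [euclNorm_eq_zero hv]
    simp [Matrix.mulVec_zero, euclNorm_zero]
  · have ht : 0 < euclNorm v := lt_of_le_of_ne (euclNorm_nonneg v) (Ne.symm hv)
    set t := euclNorm v with htdef
    have hw : euclNorm ((t⁻¹) • v) = 1 := by
      rw [euclNorm_smul, abs_of_nonneg (inv_nonneg.mpr ht.le), inv_mul_cancel₀ hv]
    have hmem : euclNorm (A *ᵥ (t⁻¹ • v)) ≤ specNorm A :=
      le_csSup (specSet_bddAbove A) ⟨t⁻¹ • v, hw.le, rfl⟩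
    have heq : euclNorm (A *ᵥ (t⁻¹ • v)) = t⁻¹ * euclNorm (A *ᵥ v) := by
      rw [Matrix.mulVec_smul, euclNorm_smul, abs_of_nonneg (inv_nonneg.mpr ht.le)]
    rw [heq] at hmem
    calc euclNorm (A *ᵥ v) = t * (t⁻¹ * euclNorm (A *ᵥ v)) := by
          field_simp
      _ ≤ t * specNorm A := mul_le_mul_of_nonneg_left hmem ht.le
      _ = specNorm A * t := mul_comm _ _

lemma frobNorm_spec_mul_le (Um : Matrix σ ι ℝ) (A : Matrix ι κ ℝ) :
    frobNorm (Um * A) ≤ specNorm Um * frobNorm A := by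
  apply sqrt_le_of_le_sq (mul_nonneg (specNorm_nonneg Um) (frobNorm_nonneg A))
  rw [mul_pow, sq_frobNorm]
  rw [Finset.sum_comm]
  calc ∑ j, ∑ s, (Um * A) s j ^ 2
      = ∑ j, euclNorm (Um *ᵥ fun i => A i j) ^ 2 := by
        refine Finset.sum_congr rfl fun j _ => ?_
        rw [sq_euclNorm]
        exact Finset.sum_congr rfl fun s _ => by
          simp [Matrix.mul_apply, Matrix.mulVec, dotProduct]
    _ ≤ ∑ j, (specNorm Um * euclNorm fun i => A i j) ^ 2 := by
        refine Finset.sum_le_sum fun j _ => ?_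
        exact pow_le_pow_left₀ (euclNorm_nonneg _) (euclNorm_mulVec_le_spec Um _) 2
    _ = specNorm Um ^ 2 * ∑ i, ∑ j, A i j ^ 2 := by
        rw [Finset.sum_comm (f := fun i j => A i j ^ 2)]
        rw [Finset.mul_sum]
        refine Finset.sum_congr rfl fun j _ => ?_
        rw [mul_pow, sq_euclNorm]

lemma frobNorm_relu_sub_relu_le (X Y : Matrix ι κ ℝ) :
    frobNorm (reluM X - reluM Y) ≤ frobNorm (X - Y) := by
  unfold frobNorm
  apply Real.sqrt_le_sqrt
  refine Finset.sum_le_sum fun i _ => Finset.sum_le_sum fun j _ => ?_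
  simp only [Matrix.sub_apply, reluM, Matrix.of_apply]
  rw [← sq_abs, ← sq_abs (X i j - Y i j)]
  exact pow_le_pow_left₀ (abs_nonneg _) (abs_max_sub_max_le_abs _ _ _) 2

lemma frobNorm_relu_le (X : Matrix ι κ ℝ) : frobNorm (reluM X) ≤ frobNorm X := by
  have h := frobNorm_relu_sub_relu_le X (0 : Matrix ι κ ℝ)
  have h0 : reluM (0 : Matrix ι κ ℝ) = 0 := by
    funext i j; simp [reluM]
  rw [h0, sub_zero, sub_zero] at h
  exact h

end Aux

set_option maxHeartbeats 1000000 in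
/-- Lipschitz-type bound for the deep decoder with the ℓ₁-style right-hand side:
for `μ`-bounded coefficients, `‖G(C) − G(C')‖₂ ≤ ξ μ^d (Σ_{i=1}^{d-1} ‖Cᵢ − Cᵢ'‖_F + ‖c_d − c_d'‖₂)`.
Layers are 0-indexed: `B 0 = B₁` is the input and `G(C) = B (d-1) *ᵥ c`. -/
theorem deep_decoder_lipschitz_l1
    (d k : ℕ) (hd : 1 ≤ d) (n : ℕ → ℕ)
    (ξ μ : ℝ) (hξ : 0 ≤ ξ) (hμ : 1 ≤ μ)
    (U : ∀ i : ℕ, Matrix (Fin (n (i + 1))) (Fin (n i)) ℝ)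
    (hU : ∀ i, i < d - 1 → specNorm (U i) ≤ 1)
    (B B' : ∀ i : ℕ, Matrix (Fin (n i)) (Fin k) ℝ)
    (C C' : ℕ → Matrix (Fin k) (Fin k) ℝ)
    (c c' : Fin k → ℝ)
    (hB1 : frobNorm (B 0) ≤ ξ) (hBB' : B' 0 = B 0)
    (hrec : ∀ i, i < d - 1 → B (i + 1) = reluM (U i * B i * C i))
    (hrec' : ∀ i, i < d - 1 → B' (i + 1) = reluM (U i * B' i * C' i))
    (hC : ∀ i, i < d - 1 → frobNorm (C i) ≤ μ) (hc : euclNorm c ≤ μ)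
    (hC' : ∀ i, i < d - 1 → frobNorm (C' i) ≤ μ) (hc' : euclNorm c' ≤ μ) :
    euclNorm (B (d - 1) *ᵥ c - B' (d - 1) *ᵥ c') ≤
      ξ * μ ^ d *
        ((∑ i ∈ Finset.range (d - 1), frobNorm (C i - C' i)) + euclNorm (c - c')) := by
  have hμ0 : 0 ≤ μ := le_trans zero_le_one hμ
  have hμp : ∀ m : ℕ, 0 ≤ μ ^ m := fun m => pow_nonneg hμ0 m
  -- monotone layer bounds
  have key : ∀ i, i ≤ d - 1 →
      frobNorm (B i) ≤ ξ * μ ^ i ∧ frobNorm (B' i) ≤ ξ * μ ^ i ∧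
      frobNorm (B i - B' i) ≤ ξ * μ ^ i * ∑ j ∈ Finset.range i, frobNorm (C j - C' j) := by
    intro i
    induction i with
    | zero =>
      intro _
      refine ⟨by simpa using hB1, by rw [hBB']; simpa using hB1, ?_⟩
      rw [hBB', sub_self]
      simp [frobNorm]
    | succ i ih =>
      intro hle
      have hi : i < d - 1 := hle
      obtain ⟨h1, h2, h3⟩ := ih (Nat.le_of_lt hi)
      have hUi := hU i hi
      have hUn := specNorm_nonneg (U i)
      have boundB : ∀ (M : Matrix (Fin (n i)) (Fin k) ℝ) (Cm : Matrix (Fin k) (Fin k) ℝ),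
          frobNorm M ≤ ξ * μ ^ i → frobNorm Cm ≤ μ →
          frobNorm (reluM (U i * M * Cm)) ≤ ξ * μ ^ (i + 1) := by
        intro M Cm hM hCm
        calc frobNorm (reluM (U i * M * Cm)) ≤ frobNorm (U i * M * Cm) := frobNorm_relu_le _
          _ ≤ frobNorm (U i * M) * frobNorm Cm := frobNorm_mul_le _ _
          _ ≤ (specNorm (U i) * frobNorm M) * frobNorm Cm :=
              mul_le_mul_of_nonneg_right (frobNorm_spec_mul_le _ _) (frobNorm_nonneg _)
          _ ≤ (1 * (ξ * μ ^ i)) * μ := by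
              refine mul_le_mul ?_ hCm (frobNorm_nonneg _) ?_
              · exact mul_le_mul hUi hM (frobNorm_nonneg _) zero_le_one
              · positivity
          _ = ξ * μ ^ (i + 1) := by ring
      refine ⟨?_, ?_, ?_⟩
      · rw [hrec i hi]; exact boundB (B i) (C i) h1 (hC i hi)
      · rw [hrec' i hi]; exact boundB (B' i) (C' i) h2 (hC' i hi)
      · rw [hrec i hi, hrec' i hi]
        have fnn : 0 ≤ frobNorm (C i - C' i) := frobNorm_nonneg _
        have snn : 0 ≤ ∑ j ∈ Finset.range i, frobNorm (C j - C' j) :=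
          Finset.sum_nonneg fun j _ => frobNorm_nonneg _
        calc frobNorm (reluM (U i * B i * C i) - reluM (U i * B' i * C' i))
            ≤ frobNorm (U i * B i * C i - U i * B' i * C' i) := frobNorm_relu_sub_relu_le _ _
          _ = frobNorm (U i * (B i - B' i) * C i + U i * B' i * (C i - C' i)) := by
              congr 1
              rw [Matrix.mul_sub (U i), Matrix.sub_mul, Matrix.mul_sub (U i * B' i)]
              abel
          _ ≤ frobNorm (U i * (B i - B' i) * C i) + frobNorm (U i * B' i * (C i - C' i)) :=
              frobNorm_add_le _ _
          _ ≤ (specNorm (U i) * frobNorm (B i - B' i)) * frobNorm (C i)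
              + (specNorm (U i) * frobNorm (B' i)) * frobNorm (C i - C' i) := by
              gcongr
              · exact le_trans (frobNorm_mul_le _ _)
                  (mul_le_mul_of_nonneg_right (frobNorm_spec_mul_le _ _) (frobNorm_nonneg _))
              · exact le_trans (frobNorm_mul_le _ _)
                  (mul_le_mul_of_nonneg_right (frobNorm_spec_mul_le _ _) (frobNorm_nonneg _))
          _ ≤ (1 * (ξ * μ ^ i * ∑ j ∈ Finset.range i, frobNorm (C j - C' j))) * μ
              + (1 * (ξ * μ ^ i)) * frobNorm (C i - C' i) := by
              refine add_le_add (mul_le_mul ?_ (hC i hi) (frobNorm_nonneg _) ?_)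
                (mul_le_mul_of_nonneg_right ?_ fnn)
              · exact mul_le_mul hUi h3 (frobNorm_nonneg _) zero_le_one
              · rw [one_mul]
                exact mul_nonneg (mul_nonneg hξ (hμp i)) snn
              · exact mul_le_mul hUi h2 (frobNorm_nonneg _) zero_le_one
          _ ≤ ξ * μ ^ (i + 1) * (∑ j ∈ Finset.range i, frobNorm (C j - C' j))
              + ξ * μ ^ (i + 1) * frobNorm (C i - C' i) := by
              rw [one_mul, one_mul]
              refine add_le_add (le_of_eq (by ring)) ?_
              exact mul_le_mul_of_nonneg_right
                (mul_le_mul_of_nonneg_left (pow_le_pow_right₀ hμ (Nat.le_succ i)) hξ)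
                fnn
          _ = ξ * μ ^ (i + 1) * ∑ j ∈ Finset.range (i + 1), frobNorm (C j - C' j) := by
              rw [Finset.sum_range_succ]; ring
  obtain ⟨hBd, hB'd, hEd⟩ := key (d - 1) le_rfl
  have split : B (d - 1) *ᵥ c - B' (d - 1) *ᵥ c'
      = (B (d - 1) - B' (d - 1)) *ᵥ c + B' (d - 1) *ᵥ (c - c') := by
    rw [Matrix.sub_mulVec, Matrix.mulVec_sub]
    abel
  have snn : 0 ≤ ∑ j ∈ Finset.range (d - 1), frobNorm (C j - C' j) :=
    Finset.sum_nonneg fun j _ => frobNorm_nonneg _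
  have cnn : 0 ≤ euclNorm (c - c') := euclNorm_nonneg _
  have hpow : μ ^ (d - 1) * μ = μ ^ d := by
    rw [← pow_succ]
    congr 1
    omega
  have hpowle : μ ^ (d - 1) ≤ μ ^ d := pow_le_pow_right₀ hμ (Nat.sub_le d 1)
  calc euclNorm (B (d - 1) *ᵥ c - B' (d - 1) *ᵥ c')
      ≤ euclNorm ((B (d - 1) - B' (d - 1)) *ᵥ c) + euclNorm (B' (d - 1) *ᵥ (c - c')) := by
        rw [split]; exact euclNorm_add_le _ _
    _ ≤ frobNorm (B (d - 1) - B' (d - 1)) * euclNorm c + frobNorm (B' (d - 1)) * euclNorm (c - c') := by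
        exact add_le_add (euclNorm_mulVec_le _ _) (euclNorm_mulVec_le _ _)
    _ ≤ (ξ * μ ^ (d - 1) * ∑ j ∈ Finset.range (d - 1), frobNorm (C j - C' j)) * μ
        + (ξ * μ ^ (d - 1)) * euclNorm (c - c') := by
        exact add_le_add
          (mul_le_mul hEd hc (euclNorm_nonneg _) (mul_nonneg (mul_nonneg hξ (hμp (d - 1))) snn))
          (mul_le_mul_of_nonneg_right hB'd cnn)
    _ ≤ ξ * μ ^ d * (∑ j ∈ Finset.range (d - 1), frobNorm (C j - C' j))
        + ξ * μ ^ d * euclNorm (c - c') := by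
        refine add_le_add (le_of_eq (by rw [← hpow]; ring)) ?_
        exact mul_le_mul_of_nonneg_right
          (mul_le_mul_of_nonneg_left hpowle hξ) cnn
    _ = ξ * μ ^ d * ((∑ i ∈ Finset.range (d - 1), frobNorm (C i - C' i)) + euclNorm (c - c')) := by
        ring
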